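/- With φ as in the previous setup (φ(u,v) = ((σ − σ_{uu} + σ_{vv} + 2iσ_u)e^{iu}, (−σ − σ_{uu} + σ_{vv} − 2iσ_v)e^{iv}), τ = σ_{vv} − σ_{uu}), and ω the symplectic form on ℂ² ≅ ℝ⁴ given by ω = dx₁∧dx₂ − dx₃∧dx₄, one has ω(φ_u, φ_v) = (σ + σ_{uu} + σ_{vv} + 2σ_{uv})·(−σ_v − σ_u − σ_{vvv} + σ_{uuv} + σ_{uvv} − σ_{uuu}). -/

import Mathlib

open Complex

/-- Partial derivative with respect to the first variable. -/
noncomputable def pu (f : ℝ → ℝ → ℝ) : ℝ → ℝ → ℝ := fun u v => deriv (fun t => f t v) u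

/-- Partial derivative with respect to the second variable. -/
noncomputable def pv (f : ℝ → ℝ → ℝ) : ℝ → ℝ → ℝ := fun u v => deriv (fun t => f u t) v

/-- Partial derivative (first variable) of a `ℂ × ℂ`-valued map. -/
noncomputable def puC (f : ℝ → ℝ → ℂ × ℂ) : ℝ → ℝ → ℂ × ℂ :=
  fun u v => (deriv (fun t => (f t v).1) u, deriv (fun t => (f t v).2) u)

/-- Partial derivative (second variable) of a `ℂ × ℂ`-valued map. -/
noncomputable def pvC (f : ℝ → ℝ → ℂ × ℂ) : ℝ → ℝ → ℂ × ℂ :=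
  fun u v => (deriv (fun t => (f u t).1) v, deriv (fun t => (f u t).2) v)

/-- The symplectic form `ω = dx₁∧dx₂ − dx₃∧dx₄` on `ℂ² ≃ ℝ⁴`
(with `(z₁,z₂) = (x₁+ix₂, x₃+ix₄)`). -/
noncomputable def omegaForm (z w : ℂ × ℂ) : ℝ :=
  (z.1.re * w.1.im - z.1.im * w.1.re) - (z.2.re * w.2.im - z.2.im * w.2.re)

lemma hasDerivAt_slice1 (f : ℝ → ℝ → ℝ) (hf : ContDiff ℝ (⊤ : ℕ∞) (Function.uncurry f)) (u v : ℝ) :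
    HasDerivAt (fun t => f t v) (fderiv ℝ (Function.uncurry f) (u, v) (1, 0)) u := by
  have hF := (hf.differentiable (by simp) (u, v)).hasFDerivAt
  have hγ : HasDerivAt (fun t : ℝ => (t, v)) ((1 : ℝ), (0 : ℝ)) u :=
    HasDerivAt.prodMk (hasDerivAt_id u) (hasDerivAt_const u v)
  exact hF.comp_hasDerivAt u hγ

lemma hasDerivAt_slice2 (f : ℝ → ℝ → ℝ) (hf : ContDiff ℝ (⊤ : ℕ∞) (Function.uncurry f)) (u v : ℝ) :
    HasDerivAt (fun t => f u t) (fderiv ℝ (Function.uncurry f) (u, v) (0, 1)) v := by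
  have hF := (hf.differentiable (by simp) (u, v)).hasFDerivAt
  have hγ : HasDerivAt (fun t : ℝ => (u, t)) ((0 : ℝ), (1 : ℝ)) v :=
    HasDerivAt.prodMk (hasDerivAt_const v u) (hasDerivAt_id v)
  exact hF.comp_hasDerivAt v hγ

lemma pu_eq (f : ℝ → ℝ → ℝ) (hf : ContDiff ℝ (⊤ : ℕ∞) (Function.uncurry f)) (u v : ℝ) :
    pu f u v = fderiv ℝ (Function.uncurry f) (u, v) (1, 0) :=
  (hasDerivAt_slice1 f hf u v).deriv

lemma pv_eq (f : ℝ → ℝ → ℝ) (hf : ContDiff ℝ (⊤ : ℕ∞) (Function.uncurry f)) (u v : ℝ) :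
    pv f u v = fderiv ℝ (Function.uncurry f) (u, v) (0, 1) :=
  (hasDerivAt_slice2 f hf u v).deriv

lemma hasDerivAt_pu (f : ℝ → ℝ → ℝ) (hf : ContDiff ℝ (⊤ : ℕ∞) (Function.uncurry f)) (u v : ℝ) :
    HasDerivAt (fun t => f t v) (pu f u v) u := by
  rw [pu_eq f hf]; exact hasDerivAt_slice1 f hf u v

lemma hasDerivAt_pv (f : ℝ → ℝ → ℝ) (hf : ContDiff ℝ (⊤ : ℕ∞) (Function.uncurry f)) (u v : ℝ) :
    HasDerivAt (fun t => f u t) (pv f u v) v := by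
  rw [pv_eq f hf]; exact hasDerivAt_slice2 f hf u v

lemma contDiff_pu (f : ℝ → ℝ → ℝ) (hf : ContDiff ℝ (⊤ : ℕ∞) (Function.uncurry f)) :
    ContDiff ℝ (⊤ : ℕ∞) (Function.uncurry (pu f)) := by
  have : Function.uncurry (pu f) = fun p : ℝ × ℝ => fderiv ℝ (Function.uncurry f) p ((1 : ℝ), (0 : ℝ)) := by
    funext p
    exact pu_eq f hf p.1 p.2
  rw [this]
  exact (hf.fderiv_right (by simp)).clm_apply contDiff_const

lemma contDiff_pv (f : ℝ → ℝ → ℝ) (hf : ContDiff ℝ (⊤ : ℕ∞) (Function.uncurry f)) :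
    ContDiff ℝ (⊤ : ℕ∞) (Function.uncurry (pv f)) := by
  have : Function.uncurry (pv f) = fun p : ℝ × ℝ => fderiv ℝ (Function.uncurry f) p ((0 : ℝ), (1 : ℝ)) := by
    funext p
    exact pv_eq f hf p.1 p.2
  rw [this]
  exact (hf.fderiv_right (by simp)).clm_apply contDiff_const

lemma pupv_comm (f : ℝ → ℝ → ℝ) (hf : ContDiff ℝ (⊤ : ℕ∞) (Function.uncurry f)) :
    pu (pv f) = pv (pu f) := by
  funext u v
  set F := Function.uncurry f
  have hF' : ∀ y, HasFDerivAt F (fderiv ℝ F y) y := fun y =>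
    (hf.differentiable (by simp) y).hasFDerivAt
  have hF'' : HasFDerivAt (fderiv ℝ F) (fderiv ℝ (fderiv ℝ F) (u, v)) (u, v) :=
    (((hf.fderiv_right (m := (⊤ : ℕ∞)) ((by simp))).differentiable (by simp)) (u, v)).hasFDerivAt
  have hsym := second_derivative_symmetric hF' hF'' ((1 : ℝ), (0 : ℝ)) ((0 : ℝ), (1 : ℝ))
  have hfd : DifferentiableAt ℝ (fderiv ℝ F) (u, v) :=
    ((hf.fderiv_right (m := (⊤ : ℕ∞)) (by simp)).differentiable (by simp)) (u, v)
  have h1 : pu (pv f) u v = fderiv ℝ (fderiv ℝ F) (u, v) ((1 : ℝ), (0 : ℝ)) ((0 : ℝ), (1 : ℝ)) := by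
    rw [pu_eq (pv f) (contDiff_pv f hf) u v]
    have : Function.uncurry (pv f) = fun p : ℝ × ℝ => fderiv ℝ F p ((0 : ℝ), (1 : ℝ)) := by
      funext p; exact pv_eq f hf p.1 p.2
    rw [this, fderiv_clm_apply hfd (differentiableAt_const _)]
    simp
  have h2 : pv (pu f) u v = fderiv ℝ (fderiv ℝ F) (u, v) ((0 : ℝ), (1 : ℝ)) ((1 : ℝ), (0 : ℝ)) := by
    rw [pv_eq (pu f) (contDiff_pu f hf) u v]
    have : Function.uncurry (pu f) = fun p : ℝ × ℝ => fderiv ℝ F p ((1 : ℝ), (0 : ℝ)) := by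
      funext p; exact pu_eq f hf p.1 p.2
    rw [this, fderiv_clm_apply hfd (differentiableAt_const _)]
    simp
  rw [h1, h2, hsym]

lemma omega_key (Z W e : ℂ) (he : e.re ^ 2 + e.im ^ 2 = 1) :
    (Z * e).re * (W * e).im - (Z * e).im * (W * e).re = Z.re * W.im - Z.im * W.re := by
  simp only [Complex.mul_re, Complex.mul_im]
  linear_combination (Z.re * W.im - Z.im * W.re) * he

lemma expI_norm (u : ℝ) : (exp (I * (u : ℂ))).re ^ 2 + (exp (I * (u : ℂ))).im ^ 2 = 1 := by
  rw [mul_comm]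
  simp only [Complex.exp_ofReal_mul_I_re, Complex.exp_ofReal_mul_I_im]
  exact Real.cos_sq_add_sin_sq u

theorem stmt_12 (σ : ℝ → ℝ → ℝ) (hσ : ContDiff ℝ (⊤ : ℕ∞) (Function.uncurry σ))
    (τ : ℝ → ℝ → ℝ) (hτ : ∀ u v, τ u v = pv (pv σ) u v - pu (pu σ) u v)
    (φ : ℝ → ℝ → ℂ × ℂ)
    (hφ : ∀ u v, φ u v =
      (((σ u v : ℂ) - (pu (pu σ) u v : ℝ) + (pv (pv σ) u v : ℝ)
          + 2 * I * (pu σ u v : ℝ)) * exp (I * u),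
       (-(σ u v : ℂ) - (pu (pu σ) u v : ℝ) + (pv (pv σ) u v : ℝ)
          - 2 * I * (pv σ u v : ℝ)) * exp (I * v))) :
    ∀ u v, omegaForm (puC φ u v) (pvC φ u v)
      = (σ u v + pu (pu σ) u v + pv (pv σ) u v + 2 * pv (pu σ) u v)
        * (-(pv σ u v) - pu σ u v - pv (pv (pv σ)) u v + pv (pu (pu σ)) u v
          + pv (pv (pu σ)) u v - pu (pu (pu σ)) u v) := by
  intro u v
  -- smoothness of iterated partials
  have hu1 := contDiff_pu σ hσ
  have hv1 := contDiff_pv σ hσ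
  have huu := contDiff_pu _ hu1
  have hvv := contDiff_pv _ hv1
  have huuu := contDiff_pu _ huu
  have hvvv := contDiff_pv _ hvv
  have hvvu := contDiff_pv _ (contDiff_pv _ hu1)
  have huvv := contDiff_pu _ hvv
  have hvuu := contDiff_pv _ huu
  have huv := contDiff_pu _ hv1
  have hvu := contDiff_pv _ hu1
  -- Schwarz symmetry
  have c1 : pu (pv σ) = pv (pu σ) := pupv_comm σ hσ
  have c2 : pu (pv (pv σ)) = pv (pv (pu σ)) := by
    have h := pupv_comm (pv σ) hv1
    rw [h, c1]
  -- derivative of the exponential factors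
  have hE : ∀ w : ℝ, HasDerivAt (fun t : ℝ => exp (I * (t : ℂ))) (exp (I * (w : ℂ)) * I) w := by
    intro w
    have hlin : HasDerivAt (fun t : ℝ => I * (t : ℂ)) I w := by
      simpa using ((hasDerivAt_id w).ofReal_comp).const_mul I
    exact hlin.cexp
  -- A-slice derivatives
  have hA_u : HasDerivAt
      (fun t : ℝ => ((σ t v : ℂ) - (pu (pu σ) t v : ℝ) + (pv (pv σ) t v : ℝ)
          + 2 * I * (pu σ t v : ℝ)))
      (((pu σ u v : ℂ) - (pu (pu (pu σ)) u v : ℝ) + (pu (pv (pv σ)) u v : ℝ)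
          + 2 * I * (pu (pu σ) u v : ℝ))) u := by
    exact ((((hasDerivAt_pu σ hσ u v).ofReal_comp).sub
        ((hasDerivAt_pu _ huu u v).ofReal_comp)).add
        ((hasDerivAt_pu _ hvv u v).ofReal_comp)).add
        (((hasDerivAt_pu _ hu1 u v).ofReal_comp).const_mul (2 * I))
  have hA_v : HasDerivAt
      (fun t : ℝ => ((σ u t : ℂ) - (pu (pu σ) u t : ℝ) + (pv (pv σ) u t : ℝ)
          + 2 * I * (pu σ u t : ℝ)))
      (((pv σ u v : ℂ) - (pv (pu (pu σ)) u v : ℝ) + (pv (pv (pv σ)) u v : ℝ)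
          + 2 * I * (pv (pu σ) u v : ℝ))) v := by
    exact ((((hasDerivAt_pv σ hσ u v).ofReal_comp).sub
        ((hasDerivAt_pv _ huu u v).ofReal_comp)).add
        ((hasDerivAt_pv _ hvv u v).ofReal_comp)).add
        (((hasDerivAt_pv _ hu1 u v).ofReal_comp).const_mul (2 * I))
  -- B-slice derivatives
  have hB_u : HasDerivAt
      (fun t : ℝ => (-(σ t v : ℂ) - (pu (pu σ) t v : ℝ) + (pv (pv σ) t v : ℝ)
          - 2 * I * (pv σ t v : ℝ)))
      ((-(pu σ u v : ℂ) - (pu (pu (pu σ)) u v : ℝ) + (pu (pv (pv σ)) u v : ℝ)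
          - 2 * I * (pu (pv σ) u v : ℝ))) u := by
    exact ((((hasDerivAt_pu σ hσ u v).ofReal_comp.neg).sub
        ((hasDerivAt_pu _ huu u v).ofReal_comp)).add
        ((hasDerivAt_pu _ hvv u v).ofReal_comp)).sub
        (((hasDerivAt_pu _ hv1 u v).ofReal_comp).const_mul (2 * I))
  have hB_v : HasDerivAt
      (fun t : ℝ => (-(σ u t : ℂ) - (pu (pu σ) u t : ℝ) + (pv (pv σ) u t : ℝ)
          - 2 * I * (pv σ u t : ℝ)))
      ((-(pv σ u v : ℂ) - (pv (pu (pu σ)) u v : ℝ) + (pv (pv (pv σ)) u v : ℝ)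
          - 2 * I * (pv (pv σ) u v : ℝ))) v := by
    exact ((((hasDerivAt_pv σ hσ u v).ofReal_comp.neg).sub
        ((hasDerivAt_pv _ huu u v).ofReal_comp)).add
        ((hasDerivAt_pv _ hvv u v).ofReal_comp)).sub
        (((hasDerivAt_pv _ hv1 u v).ofReal_comp).const_mul (2 * I))
  -- the four partial derivatives of φ
  have d11 : deriv (fun t => (φ t v).1) u =
      (((pu σ u v : ℂ) - (pu (pu (pu σ)) u v : ℝ) + (pu (pv (pv σ)) u v : ℝ)
          + 2 * I * (pu (pu σ) u v : ℝ))
        + ((σ u v : ℂ) - (pu (pu σ) u v : ℝ) + (pv (pv σ) u v : ℝ)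
          + 2 * I * (pu σ u v : ℝ)) * I) * exp (I * u) := by
    have heq : (fun t : ℝ => (φ t v).1) = fun t : ℝ =>
        ((σ t v : ℂ) - (pu (pu σ) t v : ℝ) + (pv (pv σ) t v : ℝ)
          + 2 * I * (pu σ t v : ℝ)) * exp (I * (t : ℂ)) := funext fun t => by rw [hφ]
    rw [heq]; exact (hA_u.mul (hE u)).deriv.trans (by ring)
  have d12 : deriv (fun t => (φ t v).2) u =
      ((-(pu σ u v : ℂ) - (pu (pu (pu σ)) u v : ℝ) + (pu (pv (pv σ)) u v : ℝ)
          - 2 * I * (pu (pv σ) u v : ℝ))) * exp (I * v) := by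
    have heq : (fun t : ℝ => (φ t v).2) = fun t : ℝ =>
        (-(σ t v : ℂ) - (pu (pu σ) t v : ℝ) + (pv (pv σ) t v : ℝ)
          - 2 * I * (pv σ t v : ℝ)) * exp (I * (v : ℂ)) := funext fun t => by rw [hφ]
    rw [heq, (hB_u.mul_const _).deriv]
  have d21 : deriv (fun t => (φ u t).1) v =
      (((pv σ u v : ℂ) - (pv (pu (pu σ)) u v : ℝ) + (pv (pv (pv σ)) u v : ℝ)
          + 2 * I * (pv (pu σ) u v : ℝ))) * exp (I * u) := by
    have heq : (fun t : ℝ => (φ u t).1) = fun t : ℝ =>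
        ((σ u t : ℂ) - (pu (pu σ) u t : ℝ) + (pv (pv σ) u t : ℝ)
          + 2 * I * (pu σ u t : ℝ)) * exp (I * (u : ℂ)) := funext fun t => by rw [hφ]
    rw [heq, (hA_v.mul_const _).deriv]
  have d22 : deriv (fun t => (φ u t).2) v =
      ((-(pv σ u v : ℂ) - (pv (pu (pu σ)) u v : ℝ) + (pv (pv (pv σ)) u v : ℝ)
          - 2 * I * (pv (pv σ) u v : ℝ))
        + (-(σ u v : ℂ) - (pu (pu σ) u v : ℝ) + (pv (pv σ) u v : ℝ)
          - 2 * I * (pv σ u v : ℝ)) * I) * exp (I * v) := by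
    have heq : (fun t : ℝ => (φ u t).2) = fun t : ℝ =>
        (-(σ u t : ℂ) - (pu (pu σ) u t : ℝ) + (pv (pv σ) u t : ℝ)
          - 2 * I * (pv σ u t : ℝ)) * exp (I * (t : ℂ)) := funext fun t => by rw [hφ]
    rw [heq]; exact (hB_v.mul (hE v)).deriv.trans (by ring)
  show (deriv (fun t => (φ t v).1) u).re * (deriv (fun t => (φ u t).1) v).im
      - (deriv (fun t => (φ t v).1) u).im * (deriv (fun t => (φ u t).1) v).re
      - ((deriv (fun t => (φ t v).2) u).re * (deriv (fun t => (φ u t).2) v).im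
        - (deriv (fun t => (φ t v).2) u).im * (deriv (fun t => (φ u t).2) v).re) = _
  rw [d11, d12, d21, d22, omega_key _ _ _ (expI_norm u), omega_key _ _ _ (expI_norm v)]
  simp only [Complex.add_re, Complex.add_im, Complex.sub_re, Complex.sub_im,
    Complex.neg_re, Complex.neg_im, Complex.mul_re, Complex.mul_im, Complex.I_re,
    Complex.I_im, Complex.ofReal_re, Complex.ofReal_im, Complex.re_ofNat, Complex.im_ofNat]
  rw [c1, c2]
  ring
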